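/- (Invariance of the common zero set for a system in particular involution.) Let f₁,…,f_k : ℝ^n × ℝ^n → ℝ be smooth functions in particular involution, i.e. {f_i, f_j} = Σ_m a^{ij}_m f_m pointwise for some smooth functions a^{ij}_m. Let γ : I → ℝ^n × ℝ^n be a smooth integral curve of the Hamiltonian vector field X_{f₁} on an open interval I such that each function t ↦ f_j(γ(t)) is real-analytic on I. If f_j(γ(t₀)) = 0 for all j = 1,…,k at some t₀ ∈ I, then f_j(γ(t)) = 0 for all j and all t ∈ I. -/

import Mathlib

open scoped BigOperators
open scoped ContDiff

/-!
Along an integral curve `γ` of `X_H` one has `(G ∘ γ)' = {G, H} ∘ γ`. If `{fₘ, H}` is a smooth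
combination of the `fᵣ`, then so is the derivative of any `∑ₘ cₘ(γ) fₘ(γ)` with smooth `cₘ`.
Hence every derivative of `fⱼ ∘ γ` is such a combination and vanishes at `t₀`, and the
real-analytic function `fⱼ ∘ γ` vanishes on the whole (connected) interval.
-/

/-- The `i`-th coordinate direction in the `q` (position) factor of phase space `ℝⁿ × ℝⁿ`. -/
noncomputable def eQ (n : ℕ) (i : Fin n) : (Fin n → ℝ) × (Fin n → ℝ) :=
  (Pi.single i 1, 0)

/-- The `i`-th coordinate direction in the `p` (momentum) factor of phase space `ℝⁿ × ℝⁿ`. -/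
noncomputable def eP (n : ℕ) (i : Fin n) : (Fin n → ℝ) × (Fin n → ℝ) :=
  (0, Pi.single i 1)

/-- The canonical Poisson bracket `{f,g} = Σᵢ (∂f/∂qⁱ ∂g/∂pᵢ − ∂f/∂pᵢ ∂g/∂qⁱ)` on `ℝⁿ × ℝⁿ`. -/
noncomputable def poissonBracket {n : ℕ} (f g : (Fin n → ℝ) × (Fin n → ℝ) → ℝ)
    (x : (Fin n → ℝ) × (Fin n → ℝ)) : ℝ :=
  ∑ i : Fin n, (fderiv ℝ f x (eQ n i) * fderiv ℝ g x (eP n i)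
    - fderiv ℝ f x (eP n i) * fderiv ℝ g x (eQ n i))

/-- The Hamiltonian vector field `X_f = (∂f/∂p₁,…,∂f/∂pₙ, −∂f/∂q¹,…,−∂f/∂qⁿ)` on `ℝⁿ × ℝⁿ`. -/
noncomputable def hamVF {n : ℕ} (f : (Fin n → ℝ) × (Fin n → ℝ) → ℝ)
    (x : (Fin n → ℝ) × (Fin n → ℝ)) : (Fin n → ℝ) × (Fin n → ℝ) :=
  (fun i => fderiv ℝ f x (eP n i), fun i => - fderiv ℝ f x (eQ n i))

section PhaseSpace

variable {n : ℕ}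

theorem eq_sum_smul_eQ_add_sum_smul_eP (v : (Fin n → ℝ) × (Fin n → ℝ)) :
    v = ∑ i, v.1 i • eQ n i + ∑ i, v.2 i • eP n i := by
  apply Prod.ext <;> funext j <;>
    simp [eQ, eP, Finset.sum_apply, Pi.single_apply, Prod.fst_sum, Prod.snd_sum]

theorem fderiv_apply_hamVF (G F : (Fin n → ℝ) × (Fin n → ℝ) → ℝ)
    (x : (Fin n → ℝ) × (Fin n → ℝ)) :
    fderiv ℝ G x (hamVF F x) = poissonBracket G F x := by
  conv_lhs => rw [eq_sum_smul_eQ_add_sum_smul_eP (hamVF F x)]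
  simp only [map_add, map_sum, map_smul, smul_eq_mul, ← Finset.sum_add_distrib]
  refine Finset.sum_congr rfl fun i _ => ?_
  simp only [hamVF]
  ring

theorem ContDiff.hamVF {m : WithTop ℕ∞} {F : (Fin n → ℝ) × (Fin n → ℝ) → ℝ}
    (hF : ContDiff ℝ (m + 1) F) : ContDiff ℝ m (hamVF F) := by
  have hdF := hF.fderiv_right le_rfl
  exact (contDiff_pi.mpr fun _ => hdF.clm_apply contDiff_const).prodMk
    (contDiff_pi.mpr fun _ => (hdF.clm_apply contDiff_const).neg)

theorem ContDiff.poissonBracket {m : WithTop ℕ∞} {G H : (Fin n → ℝ) × (Fin n → ℝ) → ℝ}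
    (hG : ContDiff ℝ (m + 1) G) (hH : ContDiff ℝ (m + 1) H) :
    ContDiff ℝ m (poissonBracket G H) := by
  simp only [← funext (fderiv_apply_hamVF G H)]
  exact (hG.fderiv_right le_rfl).clm_apply hH.hamVF

theorem DifferentiableAt.hasDerivAt_comp_poissonBracket
    {G H : (Fin n → ℝ) × (Fin n → ℝ) → ℝ} {γ : ℝ → (Fin n → ℝ) × (Fin n → ℝ)} {t : ℝ}
    (hG : DifferentiableAt ℝ G (γ t)) (hγ : HasDerivAt γ (hamVF H (γ t)) t) :
    HasDerivAt (fun s => G (γ s)) (poissonBracket G H (γ t)) t := by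
  rw [← fderiv_apply_hamVF]
  exact hG.hasFDerivAt.comp_hasDerivAt t hγ

end PhaseSpace

theorem AnalyticOnNhd.eqOn_zero_of_forall_iteratedDeriv_eq_zero {𝕜 E : Type*}
    [NontriviallyNormedField 𝕜] [CharZero 𝕜] [NormedAddCommGroup E] [NormedSpace 𝕜 E]
    [CompleteSpace E] {g : 𝕜 → E} {U : Set 𝕜} {z₀ : 𝕜} (hg : AnalyticOnNhd 𝕜 g U)
    (hU : IsPreconnected U) (hz₀ : z₀ ∈ U) (hderiv : ∀ N, iteratedDeriv N g z₀ = 0) :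
    Set.EqOn g 0 U := by
  have horder : analyticOrderAt g z₀ = ⊤ := ENat.eq_top_iff_forall_ge.mpr fun N =>
    (natCast_le_analyticOrderAt_iff_iteratedDeriv_eq_zero (hg z₀ hz₀)).mpr fun i _ => hderiv i
  exact hg.eqOn_zero_of_preconnected_of_eventuallyEq_zero hU hz₀
    (analyticOrderAt_eq_top.mp horder)

section SmoothCombination

variable {ι E : Type*} [Fintype ι] [NormedAddCommGroup E] [NormedSpace ℝ E]

def IsSmoothCombinationAlong (f : ι → E → ℝ) (γ : ℝ → E) (s : Set ℝ) (h : ℝ → ℝ) : Prop :=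
  ∃ c : ι → E → ℝ, (∀ m, ContDiff ℝ ∞ (c m)) ∧ ∀ t ∈ s, h t = ∑ m, c m (γ t) * f m (γ t)

theorem isSmoothCombinationAlong_comp (f : ι → E → ℝ) (γ : ℝ → E) (s : Set ℝ) (j : ι) :
    IsSmoothCombinationAlong f γ s (fun t => f j (γ t)) := by
  classical
  exact ⟨fun m _ => (Pi.single j 1 : ι → ℝ) m, fun _ => contDiff_const,
    fun t _ => by simp [Pi.single_apply]⟩

theorem IsSmoothCombinationAlong.eq_zero {f : ι → E → ℝ} {γ : ℝ → E} {s : Set ℝ} {h : ℝ → ℝ}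
    (hh : IsSmoothCombinationAlong f γ s h) {t₀ : ℝ} (ht₀ : t₀ ∈ s)
    (hzero : ∀ m, f m (γ t₀) = 0) : h t₀ = 0 := by
  obtain ⟨c, -, hc⟩ := hh
  simp [hc t₀ ht₀, hzero]

end SmoothCombination

section InvariantFamily

variable {ι : Type*} [Fintype ι] {n : ℕ} {f : ι → (Fin n → ℝ) × (Fin n → ℝ) → ℝ}
  {H : (Fin n → ℝ) × (Fin n → ℝ) → ℝ} {b : ι → ι → (Fin n → ℝ) × (Fin n → ℝ) → ℝ}
  {γ : ℝ → (Fin n → ℝ) × (Fin n → ℝ)} {s : Set ℝ}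

theorem IsSmoothCombinationAlong.deriv (hf : ∀ m, ContDiff ℝ ∞ (f m)) (hH : ContDiff ℝ ∞ H)
    (hb : ∀ m r, ContDiff ℝ ∞ (b m r))
    (hfH : ∀ m x, poissonBracket (f m) H x = ∑ r, b m r x * f r x) (hs : IsOpen s)
    (hγ : ∀ t ∈ s, HasDerivAt γ (hamVF H (γ t)) t) {h : ℝ → ℝ}
    (hh : IsSmoothCombinationAlong f γ s h) : IsSmoothCombinationAlong f γ s (deriv h) := by
  obtain ⟨c, hc, hhc⟩ := hh
  -- `(c ∘ γ)' = {c, H} ∘ γ` and `(fₘ ∘ γ)' = ∑ᵣ bₘᵣ fᵣ ∘ γ`; regroup the result by the `fᵣ`.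
  refine ⟨fun r x => poissonBracket (c r) H x + ∑ m, c m x * b m r x,
    fun r => ((hc r).poissonBracket (m := ∞) hH).add
      (ContDiff.sum fun m _ => (hc m).mul (hb m r)), fun t ht => ?_⟩
  have hdiff : ∀ {G : (Fin n → ℝ) × (Fin n → ℝ) → ℝ}, ContDiff ℝ ∞ G →
      HasDerivAt (fun s => G (γ s)) (poissonBracket G H (γ t)) t := fun hG =>
    (hG.differentiable (by simp) _).hasDerivAt_comp_poissonBracket (hγ t ht)
  have hsum := HasDerivAt.fun_sum (u := Finset.univ) fun m _ => (hdiff (hc m)).mul (hdiff (hf m))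
  rw [((hsum.congr_of_eventuallyEq (Filter.eventuallyEq_of_mem (hs.mem_nhds ht) hhc))).deriv]
  simp only [hfH, add_mul, Finset.sum_add_distrib, Finset.mul_sum, Finset.sum_mul]
  rw [Finset.sum_comm (s := Finset.univ) (t := Finset.univ)
    (f := fun m r => c m (γ t) * (b m r (γ t) * f r (γ t)))]
  simp only [mul_assoc]

theorem IsSmoothCombinationAlong.iteratedDeriv (hf : ∀ m, ContDiff ℝ ∞ (f m))
    (hH : ContDiff ℝ ∞ H) (hb : ∀ m r, ContDiff ℝ ∞ (b m r))
    (hfH : ∀ m x, poissonBracket (f m) H x = ∑ r, b m r x * f r x) (hs : IsOpen s)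
    (hγ : ∀ t ∈ s, HasDerivAt γ (hamVF H (γ t)) t) {h : ℝ → ℝ}
    (hh : IsSmoothCombinationAlong f γ s h) (N : ℕ) :
    IsSmoothCombinationAlong f γ s (iteratedDeriv N h) := by
  induction N with
  | zero => simpa using hh
  | succ N ih => simpa [iteratedDeriv_succ] using ih.deriv hf hH hb hfH hs hγ

end InvariantFamily

theorem common_zero_set_invariant_of_particular_involution_general {n k : ℕ} (hk : 0 < k)
    (f : Fin k → (Fin n → ℝ) × (Fin n → ℝ) → ℝ)
    (a : Fin k → Fin k → Fin k → (Fin n → ℝ) × (Fin n → ℝ) → ℝ)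
    (hf : ∀ i, ContDiff ℝ (⊤ : ℕ∞) (f i))
    (ha : ∀ i j m, ContDiff ℝ (⊤ : ℕ∞) (a i j m))
    (hinv : ∀ i j x, poissonBracket (f i) (f j) x = ∑ m, a i j m x * f m x)
    (t₁ t₂ : ℝ) (γ : ℝ → (Fin n → ℝ) × (Fin n → ℝ))
    (hHam : ∀ t ∈ Set.Ioo t₁ t₂, HasDerivAt γ (hamVF (f ⟨0, hk⟩) (γ t)) t)
    (hanal : ∀ j, AnalyticOnNhd ℝ (fun t => f j (γ t)) (Set.Ioo t₁ t₂))
    (t₀ : ℝ) (ht₀ : t₀ ∈ Set.Ioo t₁ t₂) (hzero : ∀ j, f j (γ t₀) = 0) :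
    ∀ j, ∀ t ∈ Set.Ioo t₁ t₂, f j (γ t) = 0 := by
  intro j
  have hcomb (N : ℕ) :
      IsSmoothCombinationAlong f γ (Set.Ioo t₁ t₂) (iteratedDeriv N fun t => f j (γ t)) :=
    (isSmoothCombinationAlong_comp f γ _ j).iteratedDeriv hf (hf ⟨0, hk⟩)
      (fun m r => ha m ⟨0, hk⟩ r) (fun m => hinv m ⟨0, hk⟩) isOpen_Ioo hHam N
  exact (hanal j).eqOn_zero_of_forall_iteratedDeriv_eq_zero isPreconnected_Ioo ht₀
    fun N => (hcomb N).eq_zero ht₀ hzero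

/-- (Invariance of the common zero set for a system in particular involution.)
If smooth `f₁,…,f_k` satisfy `{fᵢ,fⱼ} = Σₘ aᵢⱼₘ fₘ` pointwise and `γ` is a smooth integral
curve of `X_{f₁}` on an open interval along which each `t ↦ fⱼ (γ t)` is real-analytic, then
vanishing of all the `fⱼ` at `γ t₀` implies they vanish along the whole curve. -/
theorem common_zero_set_invariant_of_particular_involution {n k : ℕ} (hk : 0 < k)
    (f : Fin k → (Fin n → ℝ) × (Fin n → ℝ) → ℝ)
    (a : Fin k → Fin k → Fin k → (Fin n → ℝ) × (Fin n → ℝ) → ℝ)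
    (hf : ∀ i, ContDiff ℝ (⊤ : ℕ∞) (f i))
    (ha : ∀ i j m, ContDiff ℝ (⊤ : ℕ∞) (a i j m))
    (hinv : ∀ i j x, poissonBracket (f i) (f j) x = ∑ m, a i j m x * f m x)
    (t₁ t₂ : ℝ) (γ : ℝ → (Fin n → ℝ) × (Fin n → ℝ))
    (hγsmooth : ContDiffOn ℝ (⊤ : ℕ∞) γ (Set.Ioo t₁ t₂))
    (hHam : ∀ t ∈ Set.Ioo t₁ t₂, HasDerivAt γ (hamVF (f ⟨0, hk⟩) (γ t)) t)
    (hanal : ∀ j, AnalyticOnNhd ℝ (fun t => f j (γ t)) (Set.Ioo t₁ t₂))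
    (t₀ : ℝ) (ht₀ : t₀ ∈ Set.Ioo t₁ t₂) (hzero : ∀ j, f j (γ t₀) = 0) :
    ∀ j, ∀ t ∈ Set.Ioo t₁ t₂, f j (γ t) = 0 :=
  common_zero_set_invariant_of_particular_involution_general hk f a hf ha hinv t₁ t₂ γ hHam hanal t₀
    ht₀ hzero
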